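/- (Safety of reversible actions) Let Π = ⟨𝓕, 𝓐, s0, G⟩ be a STRIPS planning task and a ∈ 𝓐 an action that is uniformly reversible in Π (i.e., uniformly R_Π-reversible). Let s ∈ R_Π be a reachable state in which a is applicable. If some goal state of Π is reachable from s, then some goal state of Π is reachable from a[s]; hence applying a cannot create a dead end. -/
import Mathlib


/-- A STRIPS action over a type `F` of facts: a triple ⟨pre, add, del⟩ of sets of
facts with `add ∩ del = ∅` and `pre ∩ add = ∅`. States are subsets of `F`. -/
structure PlanAct (F : Type) where
  pre : Set F
  add : Set F
  del : Set F
  add_del : add ∩ del = ∅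
  pre_add : pre ∩ add = ∅

/-- Result of applying action `a` to state `s` (meaningful when `a.pre ⊆ s`). -/
def PlanAct.apply {F : Type} (a : PlanAct F) (s : Set F) : Set F :=
  (s \ a.del) ∪ a.add

/-- A sequence of actions is applicable in a state if each action is applicable
in the successively produced states. -/
def SeqApplicable {F : Type} : List (PlanAct F) → Set F → Prop
  | [], _ => True
  | a :: π, s => a.pre ⊆ s ∧ SeqApplicable π (a.apply s)

/-- Result of applying a sequence of actions to a state. -/
def SeqApply {F : Type} : List (PlanAct F) → Set F → Set F
  | [], s => s
  | a :: π, s => SeqApply π (a.apply s)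

/-- `π` is an `S`-reverse plan for `a` (w.r.t. the action set `𝓐`): all actions of
`π` are from `𝓐` and, for every `s ∈ S` in which `a` is applicable, `π` is
applicable in `a[s]` and `π[a[s]] = s`. With `S = Set.univ` this is a universal
reverse plan. -/
def IsRevPlan {F : Type} (𝓐 : Set (PlanAct F)) (S : Set (Set F)) (a : PlanAct F)
    (π : List (PlanAct F)) : Prop :=
  (∀ b ∈ π, b ∈ 𝓐) ∧
    ∀ s ∈ S, a.pre ⊆ s → SeqApplicable π (a.apply s) ∧ SeqApply π (a.apply s) = s

/-- `a` is uniformly `S`-reversible: some `S`-reverse plan for `a` exists.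
With `S = Set.univ` this is universal uniform reversibility. -/
def UniformlyReversible {F : Type} (𝓐 : Set (PlanAct F)) (S : Set (Set F))
    (a : PlanAct F) : Prop :=
  ∃ π, IsRevPlan 𝓐 S a π

/-- `s'` is reachable from `s` via actions from `𝓐`. -/
def Reachable {F : Type} (𝓐 : Set (PlanAct F)) (s s' : Set F) : Prop :=
  ∃ π : List (PlanAct F), (∀ b ∈ π, b ∈ 𝓐) ∧ SeqApplicable π s ∧ SeqApply π s = s'

/-- A STRIPS planning task ⟨𝓕, 𝓐, s0, G⟩ (the set of facts 𝓕 is the type `F`). -/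
structure Strips (F : Type) where
  acts : Set (PlanAct F)
  init : Set F
  goal : Set F

/-- R_Π: the set of states reachable from the initial state. -/
def ReachableStates {F : Type} (T : Strips F) : Set (Set F) :=
  {s | Reachable T.acts T.init s}

lemma seqApply_append {F : Type} (π ρ : List (PlanAct F)) (s : Set F) :
    SeqApply (π ++ ρ) s = SeqApply ρ (SeqApply π s) := by
  induction π generalizing s with
  | nil => rfl
  | cons a π ih => simp [SeqApply, ih]

lemma seqApplicable_append {F : Type} (π ρ : List (PlanAct F)) (s : Set F)
    (h1 : SeqApplicable π s) (h2 : SeqApplicable ρ (SeqApply π s)) :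
    SeqApplicable (π ++ ρ) s := by
  induction π generalizing s with
  | nil => exact h2
  | cons a π ih => exact ⟨h1.1, ih _ h1.2 h2⟩

theorem stmt10 {F : Type} (T : Strips F) (a : PlanAct F) (ha : a ∈ T.acts)
    (h : UniformlyReversible T.acts (ReachableStates T) a)
    (s : Set F) (hs : s ∈ ReachableStates T) (happ : a.pre ⊆ s)
    (hg : ∃ t, Reachable T.acts s t ∧ T.goal ⊆ t) :
    ∃ t, Reachable T.acts (a.apply s) t ∧ T.goal ⊆ t := by
  obtain ⟨π, hπA, hπ⟩ := h
  obtain ⟨happπ, heq⟩ := hπ s hs happ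
  obtain ⟨t, ⟨ρ, hρA, hρapp, hρeq⟩, hgt⟩ := hg
  refine ⟨t, ⟨π ++ ρ, ?_, ?_, ?_⟩, hgt⟩
  · intro b hb
    rcases List.mem_append.mp hb with h' | h'
    exacts [hπA b h', hρA b h']
  · exact seqApplicable_append _ _ _ happπ (heq.symm ▸ hρapp)
  · rw [seqApply_append, heq, hρeq]
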